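/- Let G be a g-chromatic graph of order n, let 1 <= m <= n-1, and suppose g(c) <= (|E(G)|/(n-m)) * f(c) for all colors c. If G has no f-chromatic spanning forest with exactly m components, then |E(G)| <= C(n-m, 2). -/

import Mathlib

open SimpleGraph Finset

/-- Number of connected components of a graph. -/
noncomputable def omega {V : Type*} (G : SimpleGraph V) : ℕ :=
  Nat.card G.ConnectedComponent

/-- Number of edges of `G` having color `c`. -/
noncomputable def colorCount {V C : Type*} (G : SimpleGraph V)
    (color : Sym2 V → C) (c : C) : ℕ :=
  Nat.card {e : Sym2 V // e ∈ G.edgeSet ∧ color e = c}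

/-- `G` is `f`-chromatic: each color `c` appears on at most `f c` edges. -/
def IsChromatic {V C : Type*} (G : SimpleGraph V)
    (color : Sym2 V → C) (f : C → ℕ) : Prop :=
  ∀ c, colorCount G color c ≤ f c

/-- `G - E_R(G)` : delete all edges whose color lies in `R`. -/
def delR {V C : Type*} (G : SimpleGraph V) (color : Sym2 V → C)
    (R : Finset C) : SimpleGraph V :=
  G.deleteEdges {e | color e ∈ R}

/-!
By a matroid-intersection argument, `G` has an `f`-chromatic spanning forest with exactly `m`
components as soon as `ω(G - E_R) ≤ m + f(R)` for every colour set `R`. Indeed, pass to an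
edge-minimal subgraph still satisfying these bounds. If a colour `c` were used more than `f(c)`
times there, every edge of colour `c` would be a bridge of `G - E_R` for some tight `R`
(`ω(G - E_R) = m + f(R)`); tight sets are closed under union because `R ↦ ω(G - E_R)` is
supermodular (submodularity of the graphic matroid rank). Deleting the whole colour class from
`G - E_R` for the union `R` of these sets would then break the bound at `R ∪ {c}`. So the minimal
subgraph is `f`-chromatic, and it has at most `m` components, so a spanning forest of it can be cut
down to exactly `m` components.

Hence some `R` violates the bound. Put `N = n - m` and `s = f(R)`. By the hypothesis on `g`, at most
`|E| s / N` edges have a colour in `R`. The remaining edges form a graph with more than `m + s`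
components, so there are at most `C(N - s, 2)` of them. From `|E| ≤ |E| s / N + C(N - s, 2)` we get
`|E| ≤ C(N, 2)`.
-/

lemma Finset.sum_mul_succ_le {ι : Type*} (s : Finset ι) (b : ι → ℕ) :
    ∑ i ∈ s, b i * (b i + 1) ≤ (∑ i ∈ s, b i) * (∑ i ∈ s, b i + 1) := by
  have hsq : ∑ i ∈ s, b i ^ 2 ≤ (∑ i ∈ s, b i) ^ 2 :=
    Finset.sum_sq_le_sq_sum_of_nonneg fun i _ => Nat.zero_le _
  simp only [mul_add, mul_one, Finset.sum_add_distrib, ← sq]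
  omega

namespace SimpleGraph

variable {V : Type*} {G H : SimpleGraph V}

lemma Reachable.deleteEdges_singleton_or {a b : V} (u v : V) (h : G.Reachable a b) :
    (G.deleteEdges {s(u, v)}).Reachable a b ∨ (G.deleteEdges {s(u, v)}).Reachable a u ∨
      (G.deleteEdges {s(u, v)}).Reachable a v := by
  obtain ⟨w⟩ := h
  induction w with
  | nil => exact .inl .rfl
  | @cons a c b hac _ ih =>
    by_cases hec : s(a, c) = s(u, v)
    · rcases Sym2.eq_iff.mp hec with ⟨rfl, -⟩ | ⟨rfl, -⟩
      exacts [.inr (.inl .rfl), .inr (.inr .rfl)]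
    · have hac' : (G.deleteEdges {s(u, v)}).Adj a c := by simp [hac, hec]
      exact ih.imp hac'.reachable.trans (Or.imp hac'.reachable.trans hac'.reachable.trans)

lemma deleteEdges_singleton_lt {e : Sym2 V} (he : e ∈ G.edgeSet) : G.deleteEdges {e} < G :=
  (deleteEdges_le _).lt_of_ne fun h => by
    rw [← h, edgeSet_deleteEdges] at he
    exact he.2 rfl

lemma omega_bot : omega (⊥ : SimpleGraph V) = Nat.card V :=
  Nat.card_congr (Equiv.ofBijective _ ⟨fun _ _ h => reachable_bot.mp (ConnectedComponent.exact h),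
    fun K => K.exists_rep⟩).symm

lemma degree_lt_card_filter_connectedComponentMk [Fintype V] [DecidableEq V] (H : SimpleGraph V)
    [DecidableRel H.Adj] [DecidableEq H.ConnectedComponent] (v : V) :
    H.degree v < #{w | H.connectedComponentMk w = H.connectedComponentMk v} := by
  have hsub : insert v (H.neighborFinset v) ⊆
      ({w | H.connectedComponentMk w = H.connectedComponentMk v} : Finset V) := by
    intro w hw
    rcases Finset.mem_insert.mp hw with rfl | hw
    · simp
    · simpa using (ConnectedComponent.connectedComponentMk_eq_of_adj
        ((H.mem_neighborFinset _ _).mp hw)).symm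
  have := Finset.card_le_card hsub
  rwa [Finset.card_insert_of_notMem (H.notMem_neighborFinset_self v), card_neighborFinset_eq_degree,
    Nat.succ_le_iff] at this

variable [Finite V]

lemma omega_anti (h : H ≤ G) : omega G ≤ omega H :=
  ConnectedComponent.card_le_card_of_le h

lemma omega_le_card (G : SimpleGraph V) : omega G ≤ Nat.card V :=
  omega_bot (V := V) ▸ omega_anti bot_le

lemma omega_deleteEdges_singleton_le (e : Sym2 V) :
    omega (G.deleteEdges {e}) ≤ omega G + 1 := by
  classical
  induction e using Sym2.ind with | _ u v => ?_
  set G' := G.deleteEdges {s(u, v)}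
  let π := ConnectedComponent.map (Hom.ofLE (deleteEdges_le {s(u, v)} : G' ≤ G))
  let ι : G'.ConnectedComponent → Option G.ConnectedComponent := fun K =>
    if K = G'.connectedComponentMk u then none else some (π K)
  -- components of `G'` other than that of `u` embed into those of `G`
  have hι : Function.Injective ι := by
    intro K₁ K₂ hK
    induction K₁ using ConnectedComponent.ind with | _ a => ?_
    induction K₂ using ConnectedComponent.ind with | _ b => ?_
    simp only [ι] at hK
    split_ifs at hK with ha hb hb
    · rw [ha, hb]
    · have hab : G.Reachable a b := ConnectedComponent.exact (Option.some_inj.mp hK)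
      rw [ConnectedComponent.eq] at ha hb ⊢
      rcases hab.deleteEdges_singleton_or u v with h | h | hav
      · exact h
      · exact absurd h ha
      rcases hab.symm.deleteEdges_singleton_or u v with h | h | hbv
      · exact h.symm
      · exact absurd h hb
      · exact hav.trans hbv.symm
  calc omega G' ≤ Nat.card (Option G.ConnectedComponent) := Nat.card_le_card_of_injective ι hι
    _ = omega G + 1 := by rw [Finite.card_option]; rfl

lemma omega_deleteEdges_singleton_of_not_isBridge {e : Sym2 V} (h : ¬ G.IsBridge e) :
    omega (G.deleteEdges {e}) = omega G := by
  induction e using Sym2.ind with | _ u v => ?_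
  set G' := G.deleteEdges {s(u, v)}
  have huv : G'.Reachable u v := not_not.mp (isBridge_iff.not.mp h)
  have hπ : Function.Injective (ConnectedComponent.map (Hom.ofLE (deleteEdges_le _ : G' ≤ G))) := by
    intro K₁ K₂ hK
    induction K₁ using ConnectedComponent.ind with | _ a => ?_
    induction K₂ using ConnectedComponent.ind with | _ b => ?_
    have hab : G.Reachable a b := ConnectedComponent.exact hK
    rw [ConnectedComponent.eq]
    have toU : ∀ {x y : V}, G.Reachable x y → G'.Reachable x y ∨ G'.Reachable x u := fun hxy =>
      (hxy.deleteEdges_singleton_or u v).imp_right (Or.elim · id (·.trans huv.symm))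
    rcases toU hab, toU hab.symm with ⟨hab' | hau, hba | hbu⟩
    exacts [hab', hab', hba.symm, hau.trans hbu.symm]
  exact le_antisymm (Nat.card_le_card_of_injective _ hπ) (omega_anti (deleteEdges_le _))

lemma omega_deleteEdges_singleton_of_isBridge {e : Sym2 V} (he : e ∈ G.edgeSet)
    (h : G.IsBridge e) : omega (G.deleteEdges {e}) = omega G + 1 := by
  induction e using Sym2.ind with | _ u v => ?_
  set G' := G.deleteEdges {s(u, v)}
  refine le_antisymm (omega_deleteEdges_singleton_le _) (Nat.succ_le_of_lt (lt_of_not_ge ?_))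
  intro hle
  have hπ := (ConnectedComponent.surjective_map_ofLE (deleteEdges_le _ : G' ≤ G)
    ).bijective_of_nat_card_le hle
  refine isBridge_iff.mp h (ConnectedComponent.exact (hπ.injective ?_))
  exact ConnectedComponent.sound (G.mem_edgeSet.mp he).reachable

lemma omega_deleteEdges_of_isBridge {B : Set (Sym2 V)} (hB : B ⊆ G.edgeSet)
    (hbr : ∀ e ∈ B, G.IsBridge e) : omega (G.deleteEdges B) = omega G + B.ncard := by
  induction B, B.toFinite using Set.Finite.induction_on with
  | empty => simp
  | @insert e B he hBfin ih =>
    rw [Set.insert_subset_iff] at hB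
    rw [Set.ncard_insert_of_notMem he hBfin, ← Set.union_singleton, ← deleteEdges_deleteEdges,
      omega_deleteEdges_singleton_of_isBridge (by simp [hB.1, he])
        ((hbr e (Set.mem_insert e B)).anti (deleteEdges_le _)),
      ih hB.2 fun e' he' => hbr e' (Set.mem_insert_of_mem e he')]
    ring

lemma exists_isAcyclic_le_omega_eq {m : ℕ} (hG : omega G ≤ m) (hm : m ≤ Nat.card V) :
    ∃ F ≤ G, F.IsAcyclic ∧ omega F = m := by
  obtain ⟨F, hFG, hF⟩ := exists_minimal_le_of_wellFoundedLT (fun F => omega F ≤ m) G hG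
  have hdel : ∀ e ∈ F.edgeSet, m < omega (F.deleteEdges {e}) := fun e he =>
    lt_of_not_ge (hF.not_prop_of_lt (deleteEdges_singleton_lt he))
  refine ⟨F, hFG, isAcyclic_iff_forall_isBridge.mpr fun e he => ?_, le_antisymm hF.prop ?_⟩
  · by_contra hbr
    have := hdel e he
    rw [omega_deleteEdges_singleton_of_not_isBridge hbr] at this
    exact this.not_ge hF.prop
  · by_contra! hlt
    obtain ⟨e, he⟩ | hbot := F.edgeSet.eq_empty_or_nonempty.symm
    · have := omega_deleteEdges_singleton_le (G := F) e
      have := hdel e he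
      omega
    · rw [edgeSet_eq_empty.mp hbot, omega_bot] at hlt
      omega

lemma omega_deleteEdges_singleton_add_omega_le {K K' : SimpleGraph V} (h : K' ≤ K) {e : Sym2 V}
    (he : e ∈ K.edgeSet → e ∈ K'.edgeSet) :
    omega (K.deleteEdges {e}) + omega K' ≤ omega (K'.deleteEdges {e}) + omega K := by
  by_cases heK : e ∈ K.edgeSet
  · by_cases hbr : K.IsBridge e
    · rw [omega_deleteEdges_singleton_of_isBridge heK hbr,
        omega_deleteEdges_singleton_of_isBridge (he heK) (hbr.anti h)]
      omega
    · rw [omega_deleteEdges_singleton_of_not_isBridge hbr]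
      have := omega_anti (deleteEdges_le {e} : K'.deleteEdges {e} ≤ K')
      omega
  · have heK' : e ∉ K'.edgeSet := fun h' => heK (edgeSet_mono h h')
    rw [deleteEdges_eq_self.mpr (Set.disjoint_singleton_right.mpr heK),
      deleteEdges_eq_self.mpr (Set.disjoint_singleton_right.mpr heK'), add_comm]

lemma omega_deleteEdges_add_omega_le {K K' : SimpleGraph V} (h : K' ≤ K) {D : Set (Sym2 V)}
    (hD : ∀ e ∈ D, e ∈ K.edgeSet → e ∈ K'.edgeSet) :
    omega (K.deleteEdges D) + omega K' ≤ omega (K'.deleteEdges D) + omega K := by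
  induction D, D.toFinite using Set.Finite.induction_on with
  | empty => simp [add_comm]
  | @insert e D he _ ih =>
    have hstep := omega_deleteEdges_singleton_add_omega_le
      (deleteEdges_mono h : K'.deleteEdges D ≤ K.deleteEdges D) (e := e) (by
        simp only [edgeSet_deleteEdges, Set.mem_sdiff]
        exact fun ⟨heK, heD⟩ => ⟨hD e (Set.mem_insert e D) heK, heD⟩)
    have := ih fun e' he' => hD e' (Set.mem_insert_of_mem e he')
    simp only [← Set.union_singleton, ← deleteEdges_deleteEdges]
    omega

theorem omega_deleteEdges_add_omega_deleteEdges_le (G : SimpleGraph V) (S T : Set (Sym2 V)) :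
    omega (G.deleteEdges S) + omega (G.deleteEdges T) ≤
      omega (G.deleteEdges (S ∪ T)) + omega (G.deleteEdges (S ∩ T)) := by
  have := omega_deleteEdges_add_omega_le (deleteEdges_anti Set.inter_subset_right :
    G.deleteEdges S ≤ G.deleteEdges (T ∩ S)) (D := T \ S) (by
      simp only [edgeSet_deleteEdges, Set.mem_sdiff]
      exact fun e ⟨_, heS⟩ ⟨heG, _⟩ => ⟨heG, heS⟩)
  rwa [deleteEdges_deleteEdges, deleteEdges_deleteEdges, Set.union_sdiff_self,
    Set.inter_union_sdiff, add_comm (omega (G.deleteEdges T)), Set.inter_comm T S] at this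

lemma two_mul_card_edgeSet_le (H : SimpleGraph V) :
    2 * Nat.card H.edgeSet ≤ (Nat.card V - omega H) * (Nat.card V - omega H + 1) := by
  classical
  cases nonempty_fintype V
  let k : H.ConnectedComponent → ℕ := fun K => #{v | H.connectedComponentMk v = K}
  have hk : ∑ K, k K = Nat.card V := by
    rw [Nat.card_eq_fintype_card, ← Finset.card_univ]
    exact (Finset.card_eq_sum_card_fiberwise fun _ _ => Finset.mem_univ _).symm
  have hk_pos : ∀ K, 1 ≤ k K := fun K => by
    induction K using ConnectedComponent.ind with | _ v => exact Finset.card_pos.mpr ⟨v, by simp⟩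
  have hsub : ∑ K, (k K - 1) = Nat.card V - omega H := by
    rw [Finset.sum_tsub_distrib _ fun K _ => hk_pos K, hk, Finset.sum_const, smul_eq_mul, mul_one,
      Finset.card_univ, omega, Nat.card_eq_fintype_card (α := H.ConnectedComponent)]
  calc 2 * Nat.card H.edgeSet = ∑ v, H.degree v := by
        rw [sum_degrees_eq_twice_card_edges, Nat.card_eq_card_toFinset, edgeFinset]
    _ ≤ ∑ v, (k (H.connectedComponentMk v) - 1) :=
        Finset.sum_le_sum fun v _ =>
          Nat.le_sub_one_of_lt (H.degree_lt_card_filter_connectedComponentMk v)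
    _ = ∑ K, (k K - 1) * (k K - 1 + 1) := by
        rw [← Finset.sum_fiberwise' _ H.connectedComponentMk (fun K => k K - 1)]
        refine Finset.sum_congr rfl fun K _ => ?_
        rw [Finset.sum_const, smul_eq_mul, Nat.sub_add_cancel (hk_pos K), mul_comm]
    _ ≤ _ := hsub ▸ Finset.sum_mul_succ_le _ _

lemma mem_edgeSet_and_isBridge_of_omega_lt {e : Sym2 V}
    (h : omega G < omega (G.deleteEdges {e})) : e ∈ G.edgeSet ∧ G.IsBridge e := by
  by_contra hne
  rcases not_and_or.mp hne with he | hbr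
  · rw [deleteEdges_eq_self.mpr (Set.disjoint_singleton_right.mpr he)] at h
    exact h.false
  · rw [omega_deleteEdges_singleton_of_not_isBridge hbr] at h
    exact h.false

end SimpleGraph

section Colors

variable {V C : Type*} {G F : SimpleGraph V} {color : Sym2 V → C} {f : C → ℕ} {m : ℕ}

lemma mem_edgeSet_delR {R : Finset C} {e : Sym2 V} :
    e ∈ (delR G color R).edgeSet ↔ e ∈ G.edgeSet ∧ color e ∉ R := by
  simp [delR]

lemma delR_anti {R₁ R₂ : Finset C} (h : R₁ ⊆ R₂) : delR G color R₂ ≤ delR G color R₁ :=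
  deleteEdges_anti fun _ he => h he

lemma delR_deleteEdges (R : Finset C) (s : Set (Sym2 V)) :
    delR (G.deleteEdges s) color R = (delR G color R).deleteEdges s := by
  rw [delR, delR, deleteEdges_deleteEdges, deleteEdges_deleteEdges, Set.union_comm]

def colorClass (G : SimpleGraph V) (color : Sym2 V → C) (c : C) : Set (Sym2 V) :=
  {e | e ∈ G.edgeSet ∧ color e = c}

lemma colorCount_eq_ncard_colorClass (c : C) :
    colorCount G color c = (colorClass G color c).ncard :=
  Nat.card_coe_set_eq _

lemma colorClass_subset_edgeSet_delR {R : Finset C} {c : C} (hc : c ∉ R) :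
    colorClass G color c ⊆ (delR G color R).edgeSet :=
  fun _ he => mem_edgeSet_delR.mpr ⟨he.1, he.2 ▸ hc⟩

lemma deleteEdges_colorClass_delR [DecidableEq C] (R : Finset C) (c : C) :
    (delR G color R).deleteEdges (colorClass G color c) = delR G color (insert c R) := by
  ext u v
  simp only [delR, colorClass, deleteEdges_adj, Set.mem_ofPred_eq, Finset.mem_insert, mem_edgeSet]
  tauto

def ComponentBound (G : SimpleGraph V) (color : Sym2 V → C) (f : C → ℕ) (m : ℕ) : Prop :=
  ∀ R : Finset C, omega (delR G color R) ≤ m + ∑ c ∈ R, f c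

variable [Finite V]

lemma colorCount_mono (h : F ≤ G) (c : C) : colorCount F color c ≤ colorCount G color c :=
  Nat.card_le_card_of_injective (Subtype.map id fun _ he => ⟨edgeSet_mono h he.1, he.2⟩)
    (Subtype.map_injective _ Function.injective_id)

lemma IsChromatic.anti (h : F ≤ G) (hG : IsChromatic G color f) : IsChromatic F color f :=
  fun c => (colorCount_mono h c).trans (hG c)

lemma omega_delR_add_omega_delR_le [DecidableEq C] (R₁ R₂ : Finset C) :
    omega (delR G color R₁) + omega (delR G color R₂) ≤
      omega (delR G color (R₁ ∪ R₂)) + omega (delR G color (R₁ ∩ R₂)) := by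
  have hunion : {e | color e ∈ R₁ ∪ R₂} = {e | color e ∈ R₁} ∪ {e | color e ∈ R₂} :=
    Set.ext fun _ => Finset.mem_union
  have hinter : {e | color e ∈ R₁ ∩ R₂} = {e | color e ∈ R₁} ∩ {e | color e ∈ R₂} :=
    Set.ext fun _ => Finset.mem_inter
  simpa only [delR, hunion, hinter] using omega_deleteEdges_add_omega_deleteEdges_le G _ _

lemma ComponentBound.tight_union [DecidableEq C] (hG : ComponentBound G color f m)
    {R₁ R₂ : Finset C} (h₁ : m + ∑ c ∈ R₁, f c ≤ omega (delR G color R₁))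
    (h₂ : m + ∑ c ∈ R₂, f c ≤ omega (delR G color R₂)) :
    m + ∑ c ∈ R₁ ∪ R₂, f c ≤ omega (delR G color (R₁ ∪ R₂)) := by
  have := omega_delR_add_omega_delR_le (G := G) (color := color) R₁ R₂
  have := hG (R₁ ∩ R₂)
  have := Finset.sum_union_inter (s₁ := R₁) (s₂ := R₂) (f := f)
  omega

lemma ComponentBound.exists_tight_isBridge (hG : ComponentBound G color f m) {e : Sym2 V}
    (he : ¬ ComponentBound (G.deleteEdges {e}) color f m) :
    ∃ R : Finset C, m + ∑ c ∈ R, f c ≤ omega (delR G color R) ∧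
      e ∈ (delR G color R).edgeSet ∧ (delR G color R).IsBridge e := by
  simp only [ComponentBound, not_forall, not_le, delR_deleteEdges] at he
  obtain ⟨R, hR⟩ := he
  have := hG R
  have := omega_deleteEdges_singleton_le (G := delR G color R) e
  exact ⟨R, by omega, mem_edgeSet_and_isBridge_of_omega_lt (by omega)⟩

lemma ComponentBound.exists_deleteEdges [DecidableEq C] (hG : ComponentBound G color f m)
    {c₀ : C} (hc₀ : f c₀ < colorCount G color c₀) :
    ∃ e ∈ G.edgeSet, ComponentBound (G.deleteEdges {e}) color f m := by
  by_contra! hdel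
  set B := colorClass G color c₀
  choose! R hR using fun e (he : e ∈ B) => hG.exists_tight_isBridge (hdel e he.1)
  have hBne : B.toFinite.toFinset.Nonempty := by
    rw [Set.Finite.toFinset_nonempty, ← Set.ncard_pos, ← colorCount_eq_ncard_colorClass]
    omega
  set R₀ := B.toFinite.toFinset.sup' hBne R
  have hR₀ : ∀ e ∈ B, R e ⊆ R₀ := fun e he => Finset.le_sup' R (by simpa using he)
  have htight : m + ∑ c ∈ R₀, f c ≤ omega (delR G color R₀) :=
    Finset.sup'_induction hBne R (p := fun R => m + ∑ c ∈ R, f c ≤ omega (delR G color R))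
      (fun _ h₁ _ h₂ => hG.tight_union h₁ h₂)
      fun e he => (hR e (by simpa using he)).1
  have hc₀R₀ : c₀ ∉ R₀ :=
    Finset.sup'_induction hBne R (p := (c₀ ∉ ·)) (fun _ h₁ _ h₂ => by simp [h₁, h₂]) fun e he => by
      obtain ⟨heB, hcol⟩ : e ∈ B := by simpa using he
      exact hcol ▸ (mem_edgeSet_delR.mp (hR e ⟨heB, hcol⟩).2.1).2
  have hsplit := omega_deleteEdges_of_isBridge
    (colorClass_subset_edgeSet_delR hc₀R₀)
    fun e he => (hR e he).2.2.anti (delR_anti (hR₀ e he))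
  have := hG (insert c₀ R₀)
  rw [deleteEdges_colorClass_delR, ← colorCount_eq_ncard_colorClass] at hsplit
  rw [Finset.sum_insert hc₀R₀] at this
  omega

theorem ComponentBound.exists_isAcyclic_isChromatic [DecidableEq C]
    (hG : ComponentBound G color f m) (hm : m ≤ Nat.card V) :
    ∃ F ≤ G, F.IsAcyclic ∧ omega F = m ∧ IsChromatic F color f := by
  obtain ⟨H, hHG, hH⟩ := exists_minimal_le_of_wellFoundedLT (ComponentBound · color f m) G hG
  have hHchrom : IsChromatic H color f := fun c => by
    by_contra! hc
    obtain ⟨e, he, hHe⟩ := hH.prop.exists_deleteEdges hc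
    exact hH.not_prop_of_lt (deleteEdges_singleton_lt he) hHe
  obtain ⟨F, hFH, hFac, hFm⟩ := exists_isAcyclic_le_omega_eq (by simpa [delR] using hH.prop ∅) hm
  exact ⟨F, hFH.trans hHG, hFac, hFm, hHchrom.anti hFH⟩

lemma card_edgeSet_eq_card_edgeSet_delR_add_sum_colorCount [DecidableEq C] (R : Finset C) :
    Nat.card G.edgeSet = Nat.card (delR G color R).edgeSet + ∑ c ∈ R, colorCount G color c := by
  induction R using Finset.induction_on with
  | empty => simp [delR]
  | @insert c R hc ih =>
    rw [Finset.sum_insert hc, ih, ← deleteEdges_colorClass_delR, colorCount_eq_ncard_colorClass,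
      Nat.card_coe_set_eq, Nat.card_coe_set_eq, edgeSet_deleteEdges,
      ← Set.ncard_sdiff_add_ncard_of_subset (colorClass_subset_edgeSet_delR hc)]
    ring

end Colors

-- `a` and `b` count the edges of `G - E_R` and of `E_R`; here `N = n - m`, `s = f(R)` and
-- `q = n - ω(G - E_R)`.
lemma two_mul_le_mul_pred_of_split {e a b N s q : ℕ} (he : e = a + b) (ha : 2 * a ≤ q * (q + 1))
    (hb : b * N ≤ e * s) (hq : q + s + 1 ≤ N) : 2 * e ≤ N * (N - 1) := by
  have h₁ : 2 * e * (q + 1) ≤ q * N * (q + 1) := by nlinarith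
  have h₂ : 2 * e ≤ q * N := Nat.le_of_mul_le_mul_right h₁ (Nat.succ_pos q)
  have h₃ : q * N ≤ (N - 1) * N := Nat.mul_le_mul_right N (by omega)
  linarith [Nat.mul_comm N (N - 1)]

theorem stmt17_general {V C : Type*} [Fintype V] (G : SimpleGraph V) (color : Sym2 V → C)
    (f g : C → ℕ) (n m : ℕ) (hn : Fintype.card V = n)
    (hm2 : m ≤ n - 1)
    (hg : IsChromatic G color g)
    (hfg : ∀ c, (g c : ℚ) ≤ (Nat.card G.edgeSet : ℚ) / ((n : ℚ) - m) * f c)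
    (hno : ¬ ∃ F : SimpleGraph V, F ≤ G ∧ F.IsAcyclic ∧ omega F = m ∧
      IsChromatic F color f) :
    Nat.card G.edgeSet ≤ (n - m).choose 2 := by
  classical
  rw [← Nat.card_eq_fintype_card] at hn
  subst hn
  obtain ⟨R, hR⟩ : ∃ R : Finset C, m + ∑ c ∈ R, f c < omega (delR G color R) := by
    by_contra! hbound
    exact hno (ComponentBound.exists_isAcyclic_isChromatic hbound (by omega))
  have hcomp := omega_le_card (delR G color R)
  have hcolored : (∑ c ∈ R, colorCount G color c) * (Nat.card V - m) ≤
      Nat.card G.edgeSet * ∑ c ∈ R, f c := by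
    have hN : (0 : ℚ) < Nat.card V - m := sub_pos.mpr (mod_cast (by omega : m < Nat.card V))
    have hsum := Finset.sum_le_sum fun c (_ : c ∈ R) => (Nat.cast_le.mpr (hg c)).trans (hfg c)
    rw [← Finset.mul_sum, div_mul_eq_mul_div, le_div_iff₀ hN] at hsum
    exact_mod_cast (Nat.cast_sub (R := ℚ) (by omega : m ≤ Nat.card V)).symm ▸ hsum
  rw [Nat.choose_two_right, Nat.le_div_iff_mul_le two_pos, mul_comm]
  exact two_mul_le_mul_pred_of_split (card_edgeSet_eq_card_edgeSet_delR_add_sum_colorCount R)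
    (two_mul_card_edgeSet_le _) hcolored (by omega)

theorem stmt17 {V C : Type*} [Fintype V] (G : SimpleGraph V) (color : Sym2 V → C)
    (f g : C → ℕ) (n m : ℕ) (hn : Fintype.card V = n)
    (hm1 : 1 ≤ m) (hm2 : m ≤ n - 1)
    (hg : IsChromatic G color g)
    (hfg : ∀ c, (g c : ℚ) ≤ (Nat.card G.edgeSet : ℚ) / ((n : ℚ) - m) * f c)
    (hno : ¬ ∃ F : SimpleGraph V, F ≤ G ∧ F.IsAcyclic ∧ omega F = m ∧
      IsChromatic F color f) :
    Nat.card G.edgeSet ≤ (n - m).choose 2 :=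
  stmt17_general G color f g n m hn hm2 hg hfg hno
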